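/- The multiplicative mixed composition product is a right monoid action: for c ∈ ℝ^q⟨⟨X⟩⟩ and d, e ∈ ℝ^m⟨⟨X⟩⟩, (c ∘̄ δ_d) ∘̄ δ_e = c ∘̄ (δ_d ∘ δ_e), where δ_d ∘ δ_e = δ_{e ⧢ (d ∘̄ δ_e)} is the multiplicative composition product. -/

import Mathlib

open scoped BigOperators

namespace FPS

/-- A (noncommutative) formal power series over alphabet `X` is a map from words to `ℝ`. -/
abbrev Series (X : Type*) := List X → ℝ

noncomputable section

variable {X : Type*} [DecidableEq X]

/-- The series `1·∅`. -/
def one : Series X := fun η => if η = [] then 1 else 0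

/-- Cauchy (concatenation) product. -/
def cauchy (c d : Series X) : Series X := fun η =>
  ∑ i ∈ Finset.range (η.length + 1), c (η.take i) * d (η.drop i)

/-- Shuffle product. -/
def sh (c d : Series X) : List X → ℝ
  | [] => c [] * d []
  | x :: t => sh (fun w => c (x :: w)) d t + sh c (fun w => d (x :: w)) t

/-- Cauchy powers. -/
def cpow (c : Series X) : ℕ → Series X
  | 0 => one
  | k + 1 => cauchy c (cpow c k)

/-- Shuffle powers. -/
def shpow (c : Series X) : ℕ → Series X
  | 0 => one
  | k + 1 => sh c (shpow c k)

/-- The proper series `1 - s/(s,∅)` entering the inverse formulas (negated proper part of `s/(s,∅)`). -/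
def sprime (s : Series X) : Series X := fun w => if w = [] then 0 else - (s w / s [])

/-- Cauchy inverse `(s,∅)⁻¹ Σ_k (s')^k` of a purely improper series. -/
def cInv (s : Series X) : Series X := fun η =>
  (s [])⁻¹ * ∑ k ∈ Finset.range (η.length + 1), cpow (sprime s) k η

/-- Shuffle inverse `(s,∅)⁻¹ Σ_k (s')^{⧢k}` of a purely improper series. -/
def shInv (s : Series X) : Series X := fun η =>
  (s [])⁻¹ * ∑ k ∈ Finset.range (η.length + 1), shpow (sprime s) k η

/-- The order: minimal length of a word in the support (`⊤` for the zero series). -/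
def ord (c : Series X) : ℕ∞ := sInf ((fun η : List X => (η.length : ℕ∞)) '' {η | c η ≠ 0})

/-- `σ^n` with `σ^⊤ = 0`. -/
def powE (σ : ℝ) : ℕ∞ → ℝ := fun n => if n = ⊤ then 0 else σ ^ n.toNat

/-- The ultrametric `κ(c,d) = σ^{ord(c-d)}`. -/
def kappa (σ : ℝ) (c d : Series X) : ℝ := powE σ (ord (c - d))

/-- Order of a vector of series (minimum over components). -/
def ordV {n : ℕ} (c : Fin n → Series X) : ℕ∞ := ⨅ i, ord (c i)

/-- Ultrametric on vectors of series. -/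
def kappaV (σ : ℝ) {n : ℕ} (c d : Fin n → Series X) : ℝ := powE σ (ordV (c - d))

/-- Proper part `c - (c,∅)∅`. -/
def properPart (c : Series X) : Series X := fun w => if w = [] then 0 else c w

/-- Left concatenation by a letter: `x·s`. -/
def leftc (x : X) (s : Series X) : Series X := fun η =>
  match η with
  | [] => 0
  | y :: t => if y = x then s t else 0

end

noncomputable section

/-- `φ̄_d(η)` : the algebra homomorphism defining the multiplicative mixed composition
product, with `φ̄_d(x_0)(w) = x_0 w` and `φ̄_d(x_i)(w) = x_i (d_i ⧢ w)`. -/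
def phiWord {m : ℕ} (d : Fin m → Series (Fin (m + 1))) :
    List (Fin (m + 1)) → Series (Fin (m + 1)) → Series (Fin (m + 1))
  | [], w => w
  | i :: t, w =>
      Fin.cases (leftc 0 (phiWord d t w)) (fun j => leftc j.succ (sh (d j) (phiWord d t w))) i

/-- Multiplicative mixed composition product `c ∘̄ δ_d = Σ_η (c,η) φ̄_d(η)(1)`. -/
def mix {m : ℕ} (c : Series (Fin (m + 1))) (d : Fin m → Series (Fin (m + 1))) :
    Series (Fin (m + 1)) := fun η =>
  ∑ k ∈ Finset.range (η.length + 1),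
    ∑ v : List.Vector (Fin (m + 1)) k, c v.toList * phiWord d v.toList one η

/-- `ψ_e(η)` : the algebra homomorphism defining the composition product, with
`ψ_e(x'_i)(w) = x_0 (e_i ⧢ w)`, `e_0 = 1∅`. -/
def psiWord {ℓ m : ℕ} (e : Fin ℓ → Series (Fin (m + 1))) :
    List (Fin (ℓ + 1)) → Series (Fin (m + 1)) → Series (Fin (m + 1))
  | [], w => w
  | i :: t, w => leftc 0 (sh (Fin.cases one e i) (psiWord e t w))

/-- Composition product `c ∘ e = Σ_η (c,η) ψ_e(η)(1)`. -/
def comp {ℓ m : ℕ} (c : Series (Fin (ℓ + 1))) (e : Fin ℓ → Series (Fin (m + 1))) :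
    Series (Fin (m + 1)) := fun η =>
  ∑ k ∈ Finset.range (η.length + 1),
    ∑ v : List.Vector (Fin (ℓ + 1)) k, c v.toList * psiWord e v.toList one η

/-- The multiplicative composition product on `δ`-series:
`δ_c ∘ δ_d = δ_{d ⧢ (c ∘̄ δ_d)}`, expressed on the underlying series. -/
def star {m : ℕ} (c d : Fin m → Series (Fin (m + 1))) : Fin m → Series (Fin (m + 1)) :=
  fun i => sh (d i) (mix (c i) d)

/-- The all-ones series vector (generating series of the identity `δ_1`). -/
def oneV {X : Type*} [DecidableEq X] (m : ℕ) : Fin m → Series X := fun _ => one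

open Classical in
/-- The inverse `d^{∘-1}` in the multiplicative dynamic output feedback group: the unique
solution of `e = d^{⧢-1} ∘̄ δ_e`. -/
def dynInv {m : ℕ} (d : Fin m → Series (Fin (m + 1))) : Fin m → Series (Fin (m + 1)) :=
  if h : ∃ e : Fin m → Series (Fin (m + 1)), e = fun i => mix (shInv (d i)) e then h.choose
  else oneV m

/-- Shuffle power of a family: `c^{⧢n} = c_1^{⧢n_1} ⧢ ⋯ ⧢ c_ℓ^{⧢n_ℓ}`. -/
def shFam {X : Type*} [DecidableEq X] {ℓ : ℕ} (c : Fin ℓ → Series X) (n : Fin ℓ →₀ ℕ) :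
    Series X :=
  (List.finRange ℓ).foldr (fun i acc => sh (shpow (c i) (n i)) acc) one

/-- Wiener-Fliess composition product `d ∘̂ c = Σ_{η∈X̃*} (d,η) c^{⧢η}` of a commutative
series `d` with a (proper) noncommutative series vector `c`. -/
def wf {X : Type*} [DecidableEq X] {ℓ : ℕ} (d : MvPowerSeries (Fin ℓ) ℝ)
    (c : Fin ℓ → Series X) : Series X := fun η =>
  ∑ n ∈ Finset.Iic (Finsupp.equivFunOnFinite.symm fun _ : Fin ℓ => η.length),
    MvPowerSeries.coeff n d * shFam c n η

end


/-! The left shift `x_i⁻¹` of `c ∘̄ δ_d` is `(x_0⁻¹c) ∘̄ δ_d` for `i = 0` and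
`d_i ⧢ ((x_i⁻¹c) ∘̄ δ_d)` otherwise, and `· ∘̄ δ_e` is a shuffle homomorphism (proved by the same
recursion, since the left shifts are derivations of `⧢`). Hence the left shifts of
`(c ∘̄ δ_d) ∘̄ δ_e` obey the recursion of `· ∘̄ δ_{e ⧢ (d ∘̄ δ_e)}`, and since `⧢` at a word only
sees words that are not longer, both sides agree by induction on the length of the word. -/

section LeftShift

variable {X : Type*}

/-- The left shift `x⁻¹(c)`. -/
def leftShift (x : X) (c : Series X) : Series X := fun w => c (x :: w)

theorem sh_nil (c d : Series X) : sh c d [] = c [] * d [] := rfl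

theorem sh_cons (c d : Series X) (x : X) (t : List X) :
    sh c d (x :: t) = sh (leftShift x c) d t + sh c (leftShift x d) t := rfl

theorem leftShift_sh (x : X) (c d : Series X) :
    leftShift x (sh c d) = sh (leftShift x c) d + sh c (leftShift x d) := rfl

theorem sh_congr : ∀ (η : List X) {f f' g g' : Series X},
    (∀ w : List X, w.length ≤ η.length → f w = f' w) →
    (∀ w : List X, w.length ≤ η.length → g w = g' w) →
    sh f g η = sh f' g' η
  | [], _, _, _, _, hf, hg => by rw [sh_nil, sh_nil, hf [] le_rfl, hg [] le_rfl]
  | x :: t, _, _, _, _, hf, hg => by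
      have hf' w (hw : w.length ≤ t.length) := hf w (hw.trans t.length.le_succ)
      have hg' w (hw : w.length ≤ t.length) := hg w (hw.trans t.length.le_succ)
      exact congrArg₂ (· + ·) (sh_congr t (fun w hw => hf (x :: w) (Nat.succ_le_succ hw)) hg')
        (sh_congr t hf' (fun w hw => hg (x :: w) (Nat.succ_le_succ hw)))

theorem sh_comm : ∀ (η : List X) (f g : Series X), sh f g η = sh g f η
  | [], f, g => mul_comm _ _
  | x :: t, f, g => by rw [sh_cons, sh_cons, sh_comm t (leftShift x f), sh_comm t f, add_comm]

theorem sh_zero_right : ∀ (η : List X) (f : Series X), sh f 0 η = 0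
  | [], f => mul_zero _
  | x :: t, f => by
      rw [sh_cons, sh_zero_right t]
      exact (zero_add _).trans (sh_zero_right t f)

theorem sh_add_left : ∀ (η : List X) (f g h : Series X),
    sh (f + g) h η = sh f h η + sh g h η
  | [], f, g, h => add_mul _ _ _
  | x :: t, f, g, h => by
      rw [sh_cons, sh_cons, sh_cons,
        show leftShift x (f + g) = leftShift x f + leftShift x g from rfl,
        sh_add_left t, sh_add_left t]
      ring

theorem sh_add_right (η : List X) (f g h : Series X) :
    sh f (g + h) η = sh f g η + sh f h η := by
  rw [sh_comm, sh_add_left, sh_comm η g, sh_comm η h]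

theorem sh_smul_right : ∀ (η : List X) (r : ℝ) (f g : Series X),
    sh f (fun w => r * g w) η = r * sh f g η
  | [], r, f, g => mul_left_comm _ _ _
  | x :: t, r, f, g => by
      rw [sh_cons, sh_cons,
        show leftShift x (fun w => r * g w) = fun w => r * leftShift x g w from rfl,
        sh_smul_right t, sh_smul_right t, mul_add]

theorem sh_sum_right {ι : Type*} (s : Finset ι) : ∀ (η : List X) (f : Series X)
    (g : ι → Series X), sh f (fun w => ∑ i ∈ s, g i w) η = ∑ i ∈ s, sh f (g i) η
  | [], f, g => Finset.mul_sum _ _ _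
  | x :: t, f, g => by
      rw [sh_cons, show leftShift x (fun w => ∑ i ∈ s, g i w) =
          fun w => ∑ i ∈ s, leftShift x (g i) w from rfl,
        sh_sum_right s t, sh_sum_right s t, ← Finset.sum_add_distrib]
      rfl

theorem sh_assoc : ∀ (η : List X) (f g h : Series X),
    sh (sh f g) h η = sh f (sh g h) η
  | [], f, g, h => mul_assoc _ _ _
  | x :: t, f, g, h => by
      rw [sh_cons, sh_cons, leftShift_sh, leftShift_sh, sh_add_left, sh_add_right,
        sh_assoc t, sh_assoc t, sh_assoc t, add_assoc]

theorem leftc_nil [DecidableEq X] (x : X) (s : Series X) : leftc x s [] = 0 := rfl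

theorem leftc_cons [DecidableEq X] (x y : X) (s : Series X) (t : List X) :
    leftc x s (y :: t) = if y = x then s t else 0 := rfl

end LeftShift

def vectorConsEquiv (α : Type*) (k : ℕ) : α × List.Vector α k ≃ List.Vector α (k + 1) where
  toFun p := p.1 ::ᵥ p.2
  invFun v := (v.head, v.tail)
  left_inv p := by simp
  right_inv v := v.cons_head_tail

section Mix

variable {m : ℕ}

/-- `φ̄_e(x_i)(w) = x_i (letterMap e i w)`. -/
def letterMap (e : Fin m → Series (Fin (m + 1))) :
    Fin (m + 1) → Series (Fin (m + 1)) → Series (Fin (m + 1)) :=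
  Fin.cases id fun j => sh (e j)

variable (e : Fin m → Series (Fin (m + 1)))

theorem phiWord_cons (i : Fin (m + 1)) (t : List (Fin (m + 1))) (s : Series (Fin (m + 1))) :
    phiWord e (i :: t) s = leftc i (letterMap e i (phiWord e t s)) := by
  cases i using Fin.cases <;> rfl

theorem letterMap_congr (i : Fin (m + 1)) (η : List (Fin (m + 1))) {s s' : Series (Fin (m + 1))}
    (h : ∀ w : List (Fin (m + 1)), w.length ≤ η.length → s w = s' w) :
    letterMap e i s η = letterMap e i s' η := by
  cases i using Fin.cases with
  | zero => exact h η le_rfl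
  | succ j => exact sh_congr η (fun _ _ => rfl) h

theorem letterMap_apply_zero (i : Fin (m + 1)) (η : List (Fin (m + 1))) :
    letterMap e i 0 η = 0 := by
  cases i using Fin.cases with
  | zero => rfl
  | succ j => exact sh_zero_right η _

theorem letterMap_add (i : Fin (m + 1)) (η : List (Fin (m + 1))) (s s' : Series (Fin (m + 1))) :
    letterMap e i (s + s') η = letterMap e i s η + letterMap e i s' η := by
  cases i using Fin.cases with
  | zero => rfl
  | succ j => exact sh_add_right η _ _ _

theorem letterMap_smul (i : Fin (m + 1)) (η : List (Fin (m + 1))) (r : ℝ)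
    (s : Series (Fin (m + 1))) :
    letterMap e i (fun w => r * s w) η = r * letterMap e i s η := by
  cases i using Fin.cases with
  | zero => rfl
  | succ j => exact sh_smul_right η r _ _

theorem letterMap_sum {ι : Type*} (S : Finset ι) (i : Fin (m + 1)) (η : List (Fin (m + 1)))
    (s : ι → Series (Fin (m + 1))) :
    letterMap e i (fun w => ∑ k ∈ S, s k w) η = ∑ k ∈ S, letterMap e i (s k) η := by
  cases i using Fin.cases with
  | zero => rfl
  | succ j => exact sh_sum_right S η _ _

theorem letterMap_sh_left (i : Fin (m + 1)) (η : List (Fin (m + 1))) (a b : Series (Fin (m + 1))) :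
    letterMap e i (sh a b) η = sh (letterMap e i a) b η := by
  cases i using Fin.cases with
  | zero => rfl
  | succ j => exact (sh_assoc η _ _ _).symm

theorem letterMap_sh_right (i : Fin (m + 1)) (η : List (Fin (m + 1))) (a b : Series (Fin (m + 1))) :
    letterMap e i (sh a b) η = sh a (letterMap e i b) η := by
  rw [sh_comm, ← letterMap_sh_left, show sh a b = sh b a from funext fun w => sh_comm w a b]

theorem letterMap_letterMap (f : Fin m → Series (Fin (m + 1))) (i : Fin (m + 1))
    (η : List (Fin (m + 1))) (s : Series (Fin (m + 1))) :
    letterMap e i (letterMap f i s) η = letterMap (fun j => sh (e j) (f j)) i s η := by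
  cases i using Fin.cases with
  | zero => rfl
  | succ j => exact (sh_assoc η _ _ _).symm

theorem phiWord_eq_zero_of_length_lt (v : List (Fin (m + 1))) (s : Series (Fin (m + 1))) :
    ∀ η : List (Fin (m + 1)), η.length < v.length → phiWord e v s η = 0 := by
  induction v with
  | nil => simp
  | cons i t ih =>
    rintro (_ | ⟨y, η⟩) h
    · rw [phiWord_cons, leftc_nil]
    · rw [phiWord_cons, leftc_cons]
      split_ifs
      · rw [letterMap_congr e i η (s' := 0) fun w hw => ih w (by simp at h; omega),
          letterMap_apply_zero]
      · rfl

theorem mix_eq_sum_of_length_le (c : Series (Fin (m + 1))) {η : List (Fin (m + 1))} {N : ℕ}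
    (hN : η.length ≤ N) :
    mix c e η = ∑ k ∈ Finset.range (N + 1), ∑ v : List.Vector (Fin (m + 1)) k,
      c v.toList * phiWord e v.toList one η := by
  refine Finset.sum_subset (Finset.range_subset_range.2 (by omega)) fun k _ hk => ?_
  refine Finset.sum_eq_zero fun v _ => ?_
  rw [phiWord_eq_zero_of_length_lt e v.toList one η (by simp at hk; simp; omega), mul_zero]

theorem mix_nil (c : Series (Fin (m + 1))) : mix c e [] = c [] := by
  simp [mix, phiWord, one]

theorem mix_cons_eq_sum (c : Series (Fin (m + 1))) (i : Fin (m + 1)) (η : List (Fin (m + 1))) :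
    mix c e (i :: η) = ∑ k ∈ Finset.range (η.length + 1), ∑ t : List.Vector (Fin (m + 1)) k,
      c (i :: t.toList) * letterMap e i (phiWord e t.toList one) η := by
  have h_nil : ∑ v : List.Vector (Fin (m + 1)) 0, c v.toList * phiWord e v.toList one (i :: η)
      = 0 := by simp [phiWord, one]
  rw [mix, List.length_cons, Finset.sum_range_succ', h_nil, add_zero]
  refine Finset.sum_congr rfl fun k _ => ?_
  rw [← (vectorConsEquiv _ k).sum_comp, Fintype.sum_prod_type, Fintype.sum_eq_single i]
  · simp [vectorConsEquiv, phiWord_cons, leftc_cons]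
  · intro x hx
    simp [vectorConsEquiv, phiWord_cons, leftc_cons, Ne.symm hx]

theorem leftShift_mix (c : Series (Fin (m + 1))) (i : Fin (m + 1)) :
    leftShift i (mix c e) = letterMap e i (mix (leftShift i c) e) := by
  funext η
  rw [leftShift, mix_cons_eq_sum,
    letterMap_congr e i η fun w hw => mix_eq_sum_of_length_le e _ hw, letterMap_sum]
  refine Finset.sum_congr rfl fun k _ => ?_
  rw [letterMap_sum]
  exact Finset.sum_congr rfl fun t _ => (letterMap_smul e i η _ _).symm

theorem mix_cons (c : Series (Fin (m + 1))) (i : Fin (m + 1)) (η : List (Fin (m + 1))) :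
    mix c e (i :: η) = letterMap e i (mix (leftShift i c) e) η :=
  congrFun (leftShift_mix e c i) η

theorem mix_add (a b : Series (Fin (m + 1))) : mix (a + b) e = mix a e + mix b e := by
  funext η
  simp only [mix, Pi.add_apply, add_mul, Finset.sum_add_distrib]

theorem mix_sh : ∀ (η : List (Fin (m + 1))) (a b : Series (Fin (m + 1))),
    mix (sh a b) e η = sh (mix a e) (mix b e) η
  | [], a, b => by rw [mix_nil, sh_nil, sh_nil, mix_nil, mix_nil]
  | i :: η, a, b => by
      have ih : ∀ w : List (Fin (m + 1)), w.length ≤ η.length → ∀ a b : Series (Fin (m + 1)),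
          mix (sh a b) e w = sh (mix a e) (mix b e) w := fun w _ a b => mix_sh w a b
      rw [mix_cons, leftShift_sh, mix_add, letterMap_add,
        letterMap_congr e i η fun w hw => ih w hw _ _,
        letterMap_congr e i η (s := mix (sh a _) e) fun w hw => ih w hw _ _,
        letterMap_sh_left, letterMap_sh_right, sh_cons, leftShift_mix, leftShift_mix]
termination_by η => η.length

end Mix

theorem mix_letterMap {m : ℕ} (d e : Fin m → Series (Fin (m + 1))) (i : Fin (m + 1))
    (s : Series (Fin (m + 1))) :
    mix (letterMap d i s) e = letterMap (fun j => mix (d j) e) i (mix s e) := by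
  cases i using Fin.cases with
  | zero => rfl
  | succ j => exact funext fun η => mix_sh e η _ _

theorem mix_mix {m : ℕ} (d e : Fin m → Series (Fin (m + 1))) :
    ∀ (η : List (Fin (m + 1))) (c : Series (Fin (m + 1))),
      mix (mix c d) e η = mix c (star d e) η
  | [], c => by rw [mix_nil, mix_nil, mix_nil]
  | i :: η, c => by
      rw [mix_cons, leftShift_mix, mix_letterMap, letterMap_letterMap, mix_cons]
      exact letterMap_congr _ i η fun w _ => mix_mix d e w _
termination_by η => η.length

/-- The multiplicative mixed composition product is a right monoid action:
`(c ∘̄ δ_d) ∘̄ δ_e = c ∘̄ (δ_d ∘ δ_e)` where `δ_d ∘ δ_e = δ_{e ⧢ (d ∘̄ δ_e)}`. -/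
theorem mix_right_action (q m : ℕ) (c : Fin q → Series (Fin (m + 1)))
    (d e : Fin m → Series (Fin (m + 1))) :
    ∀ i : Fin q, mix (mix (c i) d) e = mix (c i) (star d e) :=
  fun i => funext fun η => mix_mix d e η (c i)

end FPS
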